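/- arXiv:2110.08196 — 7 statements merged into one kernel-verified Lean document; each statement's English description precedes it below -/
import Mathlib

section
/- The triple (PR_k, ε, (·)*) is a comonad in coKleisli form on the category of σ-structures: for any σ-structure A, the counit ε_A : PR_k A → A given by ε_A([(p_1,a_1),...,(p_n,a_n)], i) = a_i is a σ-homomorphism, and for any σ-homomorphism f : PR_k A → B, the coextension f* : PR_k A → PR_k B given by f*(s,i) = (t,i), where t has the same pebble indices as s and j-th element f(s,j), is a σ-homomorphism, and these satisfy ε_A* = id, ε ∘ f* = f, and (g ∘ f*)* = g* ∘ f*. -/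
/-- A relational signature: a type of relation symbols with arities. -/
structure Signature where
  symb : Type
  ar : symb → ℕ

/-- A σ-structure: a universe with interpretations of the relation symbols. -/
structure Struct (σ : Signature) where
  carrier : Type
  rel : ∀ r : σ.symb, (Fin (σ.ar r) → carrier) → Prop

/-- σ-homomorphism. -/
def Hom {σ : Signature} (A B : Struct σ) (f : A.carrier → B.carrier) : Prop :=
  ∀ r x, A.rel r x → B.rel r (fun j => f (x j))

/-- Sequences of pebble placements. -/
abbrev PSeq (k : ℕ) (α : Type) := List (Fin k × α)

/-- Universe of PR_k A: a play together with an index into it. -/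
def PRW (k : ℕ) (α : Type) : Type := { p : PSeq k α × ℕ // p.2 < p.1.length }

def eltOf {k : ℕ} {α : Type} (w : PRW k α) : α := (w.1.1.get ⟨w.1.2, w.2⟩).2
def pebOf {k : ℕ} {α : Type} (w : PRW k α) : Fin k := (w.1.1.get ⟨w.1.2, w.2⟩).1

/-- The pebble p (placed at position i) does not reoccur at positions i+1,...,m of s. -/
def NoReoccur {k : ℕ} {α : Type} (s : PSeq k α) (i m : ℕ) (p : Fin k) : Prop :=
  ∀ l (h : l < s.length), i < l → l ≤ m → (s.get ⟨l, h⟩).1 ≠ p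

/-- The pebble-relation construction PR_k on σ-structures. -/
def PR {σ : Signature} (k : ℕ) (A : Struct σ) : Struct σ where
  carrier := PRW k A.carrier
  rel r x :=
    (∀ j j', (x j).1.1 = (x j').1.1) ∧
    (∀ j j', NoReoccur (x j).1.1 (x j).1.2 (x j').1.2 (pebOf (x j))) ∧
    A.rel r (fun j => eltOf (x j))

/-- Counit ε(s,i) = a_i. -/
def counit {k : ℕ} {α : Type} (w : PRW k α) : α := eltOf w

/-- Coextension f*(s,i) = (t,i) with same pebbles and j-th element f(s,j). -/
def coext {k : ℕ} {α β : Type} (f : PRW k α → β) (w : PRW k α) : PRW k β :=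
  ⟨(List.ofFn (fun j : Fin w.1.1.length => ((w.1.1.get j).1, f ⟨(w.1.1, j.1), j.2⟩)), w.1.2),
   by simpa using w.2⟩

/-- Comultiplication δ = (id)*. -/
def comult {k : ℕ} {α : Type} : PRW k α → PRW k (PRW k α) := coext id

/-- Functor action PR_k f = (f ∘ ε)*. -/
def PRmap {k : ℕ} {α β : Type} (f : α → β) : PRW k α → PRW k β :=
  coext (f ∘ counit)

/-! `coext f` keeps the pebble of every position and the distinguished index, and only replaces
the element at position `j` by `f (s, j)`. Hence the equality and active-pebble conditions of
`PR k B` are inherited verbatim from `PR k A`, compatibility is the homomorphism property of `f`,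
and the comonad laws reduce to pointwise equalities of the underlying plays. -/

section Coextension

variable {k : ℕ} {α β γ : Type}

def coextPlay (f : PRW k α → β) (s : PSeq k α) : PSeq k β :=
  List.ofFn (fun j : Fin s.length => ((s.get j).1, f ⟨(s, j.1), j.2⟩))

theorem coext_val (f : PRW k α → β) (w : PRW k α) : (coext f w).1 = (coextPlay f w.1.1, w.1.2) :=
  rfl

@[simp]
theorem length_coextPlay (f : PRW k α → β) (s : PSeq k α) : (coextPlay f s).length = s.length := by
  simp [coextPlay]

theorem get_coextPlay (f : PRW k α → β) (s : PSeq k α) (l : ℕ) (h : l < (coextPlay f s).length) :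
    (coextPlay f s).get ⟨l, h⟩ = ((s.get ⟨l, by simpa using h⟩).1, f ⟨(s, l), by simpa using h⟩) := by
  simp [coextPlay, List.getElem_ofFn]

theorem counit_coext (f : PRW k α → β) (w : PRW k α) : counit (coext f w) = f w := by
  simp only [counit, eltOf, coext_val, get_coextPlay]
  rfl

theorem pebOf_coext (f : PRW k α → β) (w : PRW k α) : pebOf (coext f w) = pebOf w := by
  simp only [pebOf, coext_val, get_coextPlay]

theorem noReoccur_coextPlay_iff (f : PRW k α → β) (s : PSeq k α) (i m : ℕ) (p : Fin k) :
    NoReoccur (coextPlay f s) i m p ↔ NoReoccur s i m p := by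
  simp only [NoReoccur, get_coextPlay, length_coextPlay]

theorem coextPlay_counit (s : PSeq k α) : coextPlay counit s = s :=
  List.ext_get (length_coextPlay _ _) fun l _ _ => by rw [get_coextPlay]; rfl

theorem coextPlay_comp_coext (f : PRW k α → β) (g : PRW k β → γ) (s : PSeq k α) :
    coextPlay (g ∘ coext f) s = coextPlay g (coextPlay f s) :=
  List.ext_get (by simp) fun l _ _ => by simp only [get_coextPlay]; rfl

theorem coext_counit : coext (counit : PRW k α → α) = id :=
  funext fun w => Subtype.ext <| by rw [coext_val, coextPlay_counit]; rfl

theorem coext_comp_coext (f : PRW k α → β) (g : PRW k β → γ) :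
    coext (g ∘ coext f) = coext g ∘ coext f :=
  funext fun w => Subtype.ext <| by simp only [coext_val, coextPlay_comp_coext, Function.comp_apply]

end Coextension

section Homomorphism

variable {σ : Signature} {k : ℕ} {A B : Struct σ}

theorem hom_counit : Hom (PR k A) A counit :=
  fun _ _ hx => hx.2.2

theorem hom_coext {f : PRW k A.carrier → B.carrier} (hf : Hom (PR k A) B f) :
    Hom (PR k A) (PR k B) (coext f) := by
  intro r (x : Fin (σ.ar r) → PRW k A.carrier) hx
  refine ⟨fun j j' => congrArg (coextPlay f) (hx.1 j j'), fun j j' => ?_, ?_⟩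
  · change NoReoccur (coextPlay f (x j).1.1) (x j).1.2 (x j').1.2 (pebOf (coext f (x j)))
    rw [pebOf_coext, noReoccur_coextPlay_iff]
    exact hx.2.1 j j'
  · change B.rel r fun j => counit (coext f (x j))
    simpa only [counit_coext] using hf r x hx

end Homomorphism

/-- (PR_k, ε, (·)*) is a comonad in coKleisli form on σ-structures. -/
theorem pr_comonad_coKleisli (σ : Signature) (k : ℕ) (A B C : Struct σ) :
    Hom (PR k A) A counit ∧
    (∀ f : PRW k A.carrier → B.carrier, Hom (PR k A) B f →
      Hom (PR k A) (PR k B) (coext f)) ∧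
    coext (counit : PRW k A.carrier → A.carrier) = id ∧
    (∀ f : PRW k A.carrier → B.carrier, Hom (PR k A) B f →
      counit ∘ coext f = f) ∧
    (∀ (f : PRW k A.carrier → B.carrier) (g : PRW k B.carrier → C.carrier),
      Hom (PR k A) B f → Hom (PR k B) C g →
      coext (g ∘ coext f) = coext g ∘ coext f) :=
  ⟨hom_counit, fun _ => hom_coext, coext_counit, fun f _ => funext (counit_coext f),
    fun f g _ _ => coext_comp_coext f g⟩
end

section
/- The map ν with components ν_A : PR_k A → P_k A defined by ν_A(s, i) = s[1,i] (the length-i prefix of s) is a morphism of comonads from PR_k to P_k: each ν_A is a σ-homomorphism, ν is natural in A, and ν commutes with the counits and comultiplications of the two comonads. -/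
/-- Universe of the pebbling comonad P_k: nonempty plays. -/
def PW (k : ℕ) (α : Type) : Type := { s : PSeq k α // s ≠ [] }

def lastPebP {k : ℕ} {α : Type} (w : PW k α) : Fin k := (w.1.getLast w.2).1
def pcounit {k : ℕ} {α : Type} (w : PW k α) : α := (w.1.getLast w.2).2

/-- The pebbling comonad construction P_k on σ-structures. -/
def Pk {σ : Signature} (k : ℕ) (A : Struct σ) : Struct σ where
  carrier := PW k A.carrier
  rel r x :=
    (∀ j j', (x j).1 <+: (x j').1 ∨ (x j').1 <+: (x j).1) ∧
    (∀ j j', (x j).1 <+: (x j').1 →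
      ∀ l (h : l < (x j').1.length), (x j).1.length ≤ l →
        ((x j').1.get ⟨l, h⟩).1 ≠ lastPebP (x j)) ∧
    A.rel r (fun j => pcounit (x j))

theorem take_ne_nil {k : ℕ} {α : Type} (s : PSeq k α) (i : ℕ) (h : i < s.length) :
    s.take (i + 1) ≠ [] := by
  apply List.ne_nil_of_length_pos
  simp [List.length_take]
  omega

/-- ν(s,i) = length-(i+1) prefix of s (the prefix up to the marked position). -/
def nu {k : ℕ} {α : Type} (w : PRW k α) : PW k α :=
  ⟨w.1.1.take (w.1.2 + 1), take_ne_nil _ _ w.2⟩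

/-- Functor action of P_k on functions. -/
def Pmap {k : ℕ} {α β : Type} (f : α → β) (w : PW k α) : PW k β :=
  ⟨w.1.map (fun q => (q.1, f q.2)), by simpa using w.2⟩

/-- Comultiplication of P_k : δ'(s) = [(p_1,s[1,1]),...,(p_n,s[1,n])]. -/
def pcomult {k : ℕ} {α : Type} (w : PW k α) : PW k (PW k α) :=
  ⟨List.ofFn (fun j : Fin w.1.length =>
     ((w.1.get j).1, (⟨w.1.take (j.1 + 1), take_ne_nil _ _ j.2⟩ : PW k α))),
   by
     apply List.ne_nil_of_length_pos
     simp [List.length_ofFn]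
     first | exact List.length_pos_iff.mpr w.2 | exact w.2⟩

/-! Everything reduces to `ν(s, i) = s[1, i]`. Plays over the same sequence have
prefix-comparable images; the positions `i+1, …, j` where `PR_k` forbids the pebble of `s_i`
to reoccur are exactly the suffix `(s[1, i], s[1, j]]` seen by `P_k`; the last element of
`s[1, i]` is `a_i`; and both sides of the comultiplication square have `l`-th entry
`(p_l, s[1, l])`, because `s[1, i][1, l] = s[1, l]` for `l ≤ i`. -/

theorem List.getLast_take_succ {α : Type} (s : List α) {i : ℕ} (h : i < s.length)
    (h' : s.take (i + 1) ≠ []) : (s.take (i + 1)).getLast h' = s[i] := by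
  simp [List.getLast_take, h]

section Nu

variable {k : ℕ} {α β : Type}

theorem length_nu (w : PRW k α) : (nu w).1.length = w.1.2 + 1 :=
  List.length_take_of_le w.2

theorem getElem_nu (w : PRW k α) {j : ℕ} (hj : j < (nu w).1.length) :
    (nu w).1[j] = w.1.1[j]'(by have := w.2; rw [length_nu] at hj; omega) :=
  List.getElem_take

theorem getLast_nu (w : PRW k α) : (nu w).1.getLast (nu w).2 = w.1.1.get ⟨w.1.2, w.2⟩ :=
  List.getLast_take_succ _ w.2 _

theorem pcounit_nu (w : PRW k α) : pcounit (nu w) = counit w :=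
  congrArg Prod.snd (getLast_nu w)

theorem lastPebP_nu (w : PRW k α) : lastPebP (nu w) = pebOf w :=
  congrArg Prod.fst (getLast_nu w)

theorem nu_prefix_nu {w w' : PRW k α} (hs : w.1.1 = w'.1.1) (hi : w.1.2 ≤ w'.1.2) :
    (nu w).1 <+: (nu w').1 := by
  simp only [nu, hs]
  exact List.take_prefix_take_left (by omega)

theorem nu_prefix_or_prefix {w w' : PRW k α} (hs : w.1.1 = w'.1.1) :
    (nu w).1 <+: (nu w').1 ∨ (nu w').1 <+: (nu w).1 :=
  (le_total _ _).imp (nu_prefix_nu hs) (nu_prefix_nu hs.symm)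

theorem pebble_nu_ne_lastPebP {w w' : PRW k α} (hs : w.1.1 = w'.1.1)
    (hnr : NoReoccur w.1.1 w.1.2 w'.1.2 (pebOf w)) {l : ℕ} (hl : l < (nu w').1.length)
    (hge : (nu w).1.length ≤ l) : ((nu w').1.get ⟨l, hl⟩).1 ≠ lastPebP (nu w) := by
  rw [length_nu] at hl hge
  have hl' : l < w.1.1.length := hs ▸ lt_of_lt_of_le hl (Nat.succ_le_of_lt w'.2)
  rw [lastPebP_nu, List.get_eq_getElem, getElem_nu, List.getElem_of_eq hs.symm]
  exact hnr l hl' (by omega) (by omega)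

theorem nu_hom {σ : Signature} (A : Struct σ) : Hom (PR k A) (Pk k A) nu := by
  rintro r x ⟨hsame, hnr, hrel⟩
  refine ⟨fun j j' => nu_prefix_or_prefix (hsame j j'),
    fun j j' _ l => pebble_nu_ne_lastPebP (hsame j j') (hnr j j'), ?_⟩
  convert hrel using 2 with j
  exact pcounit_nu (x j)

theorem length_coext (f : PRW k α → β) (w : PRW k α) :
    (coext f w).1.1.length = w.1.1.length :=
  List.length_ofFn

theorem getElem_coext (f : PRW k α → β) (w : PRW k α) {j : ℕ}
    (hj : j < (coext f w).1.1.length) :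
    (coext f w).1.1[j] =
      ((w.1.1[j]'(length_coext f w ▸ hj)).1, f ⟨(w.1.1, j), length_coext f w ▸ hj⟩) :=
  List.getElem_ofFn _

theorem length_nu_coext (f : PRW k α → β) (w : PRW k α) :
    (nu (coext f w)).1.length = (nu w).1.length := by
  simp only [length_nu]
  rfl

theorem getElem_PRmap (f : α → β) (w : PRW k α) {j : ℕ} (hj : j < (PRmap f w).1.1.length) :
    (PRmap f w).1.1[j] =
      ((w.1.1[j]'(length_coext _ w ▸ hj)).1, f (w.1.1[j]'(length_coext _ w ▸ hj)).2) :=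
  getElem_coext _ w hj

theorem getElem_comult (w : PRW k α) {j : ℕ} (hj : j < (comult w).1.1.length) :
    (comult w).1.1[j] =
      ((w.1.1[j]'(length_coext _ w ▸ hj)).1, ⟨(w.1.1, j), length_coext _ w ▸ hj⟩) :=
  getElem_coext _ w hj

theorem Pmap_nu (f : α → β) (w : PRW k α) : Pmap f (nu w) = nu (PRmap f w) := by
  refine Subtype.ext (List.ext_getElem ?_ fun j h₁ h₂ => ?_)
  · simp [Pmap, PRmap, length_nu_coext]
  · simp only [Pmap, List.getElem_map, getElem_nu, getElem_PRmap]

theorem nu_PRmap_nu_comult (w : PRW k α) : nu (PRmap nu (comult w)) = pcomult (nu w) := by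
  refine Subtype.ext (List.ext_getElem ?_ fun j h₁ h₂ => ?_)
  · simp [pcomult, PRmap, comult, length_nu_coext]
  · have hj : j < w.1.2 + 1 := by simpa [pcomult, length_nu] using h₂
    simp only [getElem_nu, getElem_PRmap, getElem_comult, pcomult, List.getElem_ofFn,
      List.get_eq_getElem]
    refine Prod.ext rfl (Subtype.ext ?_)
    show w.1.1.take (j + 1) = (w.1.1.take (w.1.2 + 1)).take (j + 1)
    rw [List.take_take, min_eq_left (by omega)]

end Nu

/-- ν_A(s,i) = s[1,i] is a morphism of comonads PR_k → P_k:
each component is a σ-homomorphism, ν is natural, and ν commutes with the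
counits and the comultiplications. -/
theorem nu_comonad_morphism (σ : Signature) (k : ℕ) :
    (∀ A : Struct σ, Hom (PR k A) (Pk k A) nu) ∧
    (∀ (A B : Struct σ) (f : A.carrier → B.carrier), Hom A B f →
      Pmap f ∘ (nu : PRW k A.carrier → PW k A.carrier) = nu ∘ PRmap f) ∧
    (∀ A : Struct σ,
      pcounit ∘ (nu : PRW k A.carrier → PW k A.carrier) = counit) ∧
    (∀ A : Struct σ,
      (nu ∘ PRmap (nu : PRW k A.carrier → PW k A.carrier)) ∘
          (comult : PRW k A.carrier → PRW k (PRW k A.carrier)) =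
        pcomult ∘ nu) :=
  ⟨nu_hom, fun _ _ f _ => funext (Pmap_nu f), fun _ => funext pcounit_nu,
    fun _ => funext nu_PRmap_nu_comult⟩
end

section
/- For every finite σ-structure A, the pathwidth of A equals the PR-coalgebra number of A minus one: pw(A) = κ^{PR}(A) − 1, where κ^{PR}(A) is the least k such that there exists a PR_k-coalgebra structure on A. -/
/-- Gaifman adjacency: equal or co-occurring in some tuple of a relation. -/
def adj {σ : Signature} (A : Struct σ) (a a' : A.carrier) : Prop :=
  a = a' ∨ ∃ (r : σ.symb) (x : Fin (σ.ar r) → A.carrier),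
    A.rel r x ∧ (∃ i, x i = a) ∧ (∃ i, x i = a')

/-- A coalgebra for PR_k: a σ-homomorphism α : A → PR_k A satisfying the
counit and comultiplication laws. -/
def IsCoalg {σ : Signature} (k : ℕ) (A : Struct σ) (α : A.carrier → PRW k A.carrier) : Prop :=
  Hom A (PR k A) α ∧ counit ∘ α = id ∧ comult ∘ α = PRmap α ∘ α

/-!
A coalgebra `c : A → PR_k A` yields a path decomposition indexed by the positions `(s, i)` of
plays, ordered lexicographically: the bag at `(s, i)` holds the elements placed in `s` at or
before `i` whose pebble has not been moved again by time `i`. Distinct elements of a bag carry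
distinct pebbles, so bags have at most `k` elements.

Conversely, restrict a path decomposition of width `w` to finitely many bags, so that first
bags exist, and enumerate `A` by first bag. If the `i`-th element is adjacent to an element at
or after position `l > i`, it lies in the first bag of the `l`-th element; hence a greedy
colouring with `w + 1` pebbles keeps the pebble of every element fixed until its last neighbour
is placed, and the single play through the enumeration is a `PR_{w+1}`-coalgebra.
-/

theorem sInf_eq_sInf_sub_one_of_succ_mem {S T : Set ℕ} (hS : S.Nonempty)
    (hST : ∀ w ∈ S, w + 1 ∈ T) (hTS : ∀ k ∈ T, k - 1 ∈ S) : sInf S = sInf T - 1 := by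
  have hT : T.Nonempty := ⟨_, hST _ hS.some_mem⟩
  have h₁ : sInf T ≤ sInf S + 1 := Nat.sInf_le (hST _ (Nat.sInf_mem hS))
  have h₂ : sInf S ≤ sInf T - 1 := Nat.sInf_le (hTS _ (Nat.sInf_mem hT))
  omega

theorem exists_fin_coloring_of_ncard_lt {ι : Type*} [LinearOrder ι] [Finite ι] {k : ℕ}
    (C : ι → ι → Prop) (hC : ∀ l, {i | i < l ∧ C i l}.ncard < k) :
    ∃ p : ι → Fin k, ∀ i l, i < l → C i l → p i ≠ p l := by
  have hfree : ∀ l (q : ∀ i, i < l → Fin k), ∃ c, ∀ i (h : i < l), C i l → q i h ≠ c := by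
    intro l q
    by_contra! hall
    choose g hgl hgC hg using hall
    have hinj : Set.InjOn g Set.univ := fun c _ c' _ h => by
      rw [← hg c, ← hg c']
      congr
    have := Set.ncard_le_ncard_of_injOn (t := {i | i < l ∧ C i l}) g
      (fun c _ => ⟨hgl c, hgC c⟩) hinj
    simp only [Set.ncard_univ, Nat.card_eq_fintype_card, Fintype.card_fin] at this
    exact (hC l).not_ge this
  choose pick hpick using hfree
  refine ⟨wellFounded_lt.fix pick, fun i l hil hCil => ?_⟩
  rw [wellFounded_lt.fix_eq pick l]
  exact hpick l (fun y _ => wellFounded_lt.fix pick y) i hil hCil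

theorem exists_equiv_fin_monotone_comp {α β : Type*} [Finite α] [LinearOrder β] (f : α → β) :
    ∃ e : Fin (Nat.card α) ≃ α, Monotone (f ∘ e) := by
  let g := (Finite.equivFin α).symm
  exact ⟨(Tuple.sort (f ∘ g)).trans g, Tuple.monotone_sort (f ∘ g)⟩

theorem Prod.Lex.fst_eq_of_le_of_le {α β : Type*} [PartialOrder α] [Preorder β] {x y z : α ×ₗ β}
    (hxy : x ≤ y) (hyz : y ≤ z) (hxz : (ofLex x).1 = (ofLex z).1) :
    (ofLex y).1 = (ofLex z).1 ∧ (ofLex x).2 ≤ (ofLex y).2 ∧ (ofLex y).2 ≤ (ofLex z).2 := by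
  have hy : (ofLex y).1 = (ofLex z).1 :=
    le_antisymm (Prod.Lex.monotone_fst _ _ hyz) (hxz ▸ Prod.Lex.monotone_fst _ _ hxy)
  have hx : (ofLex x).1 = (ofLex y).1 := hxz.trans hy.symm
  rcases Prod.Lex.le_iff.mp hxy with hxy | hxy
  · exact absurd hx hxy.ne
  rcases Prod.Lex.le_iff.mp hyz with hyz | hyz
  · exact absurd hy hyz.ne
  exact ⟨hy, hxy.2, hyz.2⟩

theorem NoReoccur.mono {k : ℕ} {α : Type} {s : PSeq k α} {i m m' : ℕ} {p : Fin k}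
    (h : NoReoccur s i m p) (hm : m' ≤ m) : NoReoccur s i m' p :=
  fun l hl h₁ h₂ => h l hl h₁ (h₂.trans hm)

theorem pebOf_eq_get {k : ℕ} {α : Type} (w : PRW k α) {s : PSeq k α} (hs : w.1.1 = s)
    (h : w.1.2 < s.length) : (s.get ⟨w.1.2, h⟩).1 = pebOf w := by
  subst hs
  rfl

theorem coext_congr {k : ℕ} {α β : Type} {f g : PRW k α → β} (w : PRW k α)
    (h : ∀ v : PRW k α, v.1.1 = w.1.1 → f v = g v) : coext f w = coext g w := by
  unfold coext
  congr 4
  funext j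
  exact Prod.ext rfl (h _ rfl)

theorem comult_comp_eq_PRmap_comp {k : ℕ} {α : Type} (c : α → PRW k α)
    (h : ∀ a (v : PRW k α), v.1.1 = (c a).1.1 → c (counit v) = v) :
    comult ∘ c = PRmap c ∘ c :=
  funext fun a => coext_congr (c a) fun v hv => (h a v hv).symm

structure IsPathDecomposition {σ : Signature} (A : Struct σ) {X : Type*} [LinearOrder X]
    (lam : X → Set A.carrier) : Prop where
  exists_mem : ∀ a, ∃ x, a ∈ lam x
  exists_mem_of_adj : ∀ a a', adj A a a' → ∃ x, a ∈ lam x ∧ a' ∈ lam x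
  inter_subset : ∀ x y x', x ≤ y → y ≤ x' → lam x ∩ lam x' ⊆ lam y

namespace IsPathDecomposition

variable {σ : Signature} {A : Struct σ} {X : Type*} [LinearOrder X] {lam : X → Set A.carrier}

theorem exists_finite_restrict [Finite A.carrier] (hpd : IsPathDecomposition A lam) :
    ∃ W : Set X, W.Finite ∧ IsPathDecomposition A fun x : W => lam x := by
  choose xw hxw using hpd.exists_mem
  choose yw hyw using fun p : {p : A.carrier × A.carrier // adj A p.1 p.2} =>
    hpd.exists_mem_of_adj _ _ p.2
  refine ⟨Set.range xw ∪ Set.range yw, (Set.finite_range xw).union (Set.finite_range yw),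
    fun a => ⟨⟨xw a, .inl ⟨a, rfl⟩⟩, hxw a⟩,
    fun a a' h => ⟨⟨yw ⟨(a, a'), h⟩, .inr ⟨_, rfl⟩⟩, hyw ⟨(a, a'), h⟩⟩,
    fun x y x' => hpd.inter_subset x y x'⟩

variable [WellFoundedLT X] (hpd : IsPathDecomposition A lam)

noncomputable def firstBag (a : A.carrier) : X :=
  wellFounded_lt.min {x | a ∈ lam x} (hpd.exists_mem a)

theorem mem_firstBag (a : A.carrier) : a ∈ lam (hpd.firstBag a) :=
  wellFounded_lt.min_mem {x | a ∈ lam x} (hpd.exists_mem a)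

theorem firstBag_le {a : A.carrier} {x : X} (h : a ∈ lam x) : hpd.firstBag a ≤ x :=
  wellFounded_lt.min_le (s := {x | a ∈ lam x}) h

theorem mem_firstBag_of_adj {a b c : A.carrier} (hab : hpd.firstBag a ≤ hpd.firstBag b)
    (hbc : hpd.firstBag b ≤ hpd.firstBag c) (hac : adj A a c) : a ∈ lam (hpd.firstBag b) := by
  obtain ⟨y, hay, hcy⟩ := hpd.exists_mem_of_adj a c hac
  exact hpd.inter_subset _ _ _ hab (hbc.trans (hpd.firstBag_le hcy)) ⟨hpd.mem_firstBag a, hay⟩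

theorem ncard_conflicts_lt {n w : ℕ} (hw : ∀ x, (lam x).Finite ∧ (lam x).ncard ≤ w + 1)
    (e : Fin n ≃ A.carrier) (he : Monotone (hpd.firstBag ∘ e)) (l : Fin n) :
    {i | i < l ∧ ∃ j, l ≤ j ∧ adj A (e i) (e j)}.ncard < w + 1 := by
  have hsub : ∀ i ∈ {i | i < l ∧ ∃ j, l ≤ j ∧ adj A (e i) (e j)},
      e i ∈ lam (hpd.firstBag (e l)) \ {e l} := by
    rintro i ⟨hil, j, hlj, hadj⟩
    exact ⟨hpd.mem_firstBag_of_adj (he hil.le) (he hlj) hadj, e.injective.ne hil.ne⟩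
  have hle := Set.ncard_le_ncard_of_injOn e hsub e.injective.injOn (hw _).1.sdiff
  rw [Set.ncard_sdiff_singleton_of_mem (hpd.mem_firstBag _)] at hle
  have := (hw (hpd.firstBag (e l))).2
  omega

end IsPathDecomposition

section PebbledAt

variable {σ : Signature} {A : Struct σ} {k : ℕ} (c : A.carrier → PRW k A.carrier)

def pebbledAt (x : PSeq k A.carrier ×ₗ ℕ) : Set A.carrier :=
  {b | (c b).1.1 = (ofLex x).1 ∧ (c b).1.2 ≤ (ofLex x).2 ∧
    NoReoccur (ofLex x).1 (c b).1.2 (ofLex x).2 (pebOf (c b))}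

theorem mem_pebbledAt_self (a : A.carrier) : a ∈ pebbledAt c (toLex (c a).1) :=
  ⟨rfl, le_rfl, fun _ _ h₁ h₂ => absurd h₂ h₁.not_ge⟩

theorem injOn_pebOf_pebbledAt (hcounit : counit ∘ c = id) (x : PSeq k A.carrier ×ₗ ℕ) :
    Set.InjOn (fun b => pebOf (c b)) (pebbledAt c x) := by
  have hinj : Function.Injective c := Function.LeftInverse.injective (congrFun hcounit)
  have hne : ∀ b ∈ pebbledAt c x, ∀ b' ∈ pebbledAt c x,
      (c b).1.2 < (c b').1.2 → pebOf (c b') ≠ pebOf (c b) := by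
    rintro b ⟨-, -, hbn⟩ b' ⟨hb', hb'i, -⟩ hlt
    have hl : (c b').1.2 < (ofLex x).1.length := hb' ▸ (c b').2
    rw [← pebOf_eq_get (c b') hb' hl]
    exact hbn _ hl hlt hb'i
  intro b hb b' hb' heq
  rcases lt_trichotomy (c b).1.2 (c b').1.2 with h | h | h
  · exact absurd heq.symm (hne b hb b' hb' h)
  · exact hinj (Subtype.ext (Prod.ext (hb.1.trans hb'.1.symm) h))
  · exact absurd heq (hne b' hb' b hb h)

theorem ncard_pebbledAt_le (hcounit : counit ∘ c = id) (x : PSeq k A.carrier ×ₗ ℕ) :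
    (pebbledAt c x).Finite ∧ (pebbledAt c x).ncard ≤ k := by
  have hinj := injOn_pebOf_pebbledAt c hcounit x
  refine ⟨Set.Finite.of_finite_image (Set.toFinite _) hinj, ?_⟩
  simpa using Set.ncard_le_ncard_of_injOn _ (fun _ _ => Set.mem_univ _) hinj

theorem isPathDecomposition_pebbledAt [LinearOrder (PSeq k A.carrier)] (hc : Hom A (PR k A) c) :
    IsPathDecomposition A (pebbledAt c) := by
  refine ⟨fun a => ⟨_, mem_pebbledAt_self c a⟩, ?_, ?_⟩
  · rintro a a' (rfl | ⟨r, x, hx, ⟨j, rfl⟩, ⟨j', rfl⟩⟩)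
    · exact ⟨_, mem_pebbledAt_self c a, mem_pebbledAt_self c a⟩
    obtain ⟨hs, hnr, -⟩ := hc r x hx
    rcases le_total (c (x j)).1.2 (c (x j')).1.2 with h | h
    · exact ⟨_, ⟨hs j j', h, hs j j' ▸ hnr j j'⟩, mem_pebbledAt_self c _⟩
    · exact ⟨_, mem_pebbledAt_self c _, ⟨hs j' j, h, hs j' j ▸ hnr j' j⟩⟩
  · rintro x y x' hxy hyx' b ⟨⟨hbx, hbi, -⟩, ⟨hbx', -, hbn'⟩⟩
    obtain ⟨hy, hxy₂, hyx'₂⟩ := Prod.Lex.fst_eq_of_le_of_le hxy hyx' (hbx.symm.trans hbx')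
    simp only [pebbledAt, Set.mem_ofPred_eq, hy]
    exact ⟨hbx', hbi.trans hxy₂, hbn'.mono hyx'₂⟩

theorem exists_pathDecomposition_of_hom_of_counit (hc : Hom A (PR k A) c)
    (hcounit : counit ∘ c = id) :
    ∃ (X : Type) (_ : LinearOrder X) (lam : X → Set A.carrier),
      IsPathDecomposition A lam ∧ ∀ x, (lam x).Finite ∧ (lam x).ncard ≤ k := by
  obtain ⟨_, -⟩ := exists_wellFoundedLT (PSeq k A.carrier)
  exact ⟨_, inferInstance, pebbledAt c, isPathDecomposition_pebbledAt c hc,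
    ncard_pebbledAt_le c hcounit⟩

end PebbledAt

section Play

variable {α : Type} {k n : ℕ} (e : Fin n ≃ α) (p : Fin n → Fin k)

def play : PSeq k α := List.ofFn fun i => (p i, e i)

theorem length_play : (play e p).length = n := List.length_ofFn

@[simp]
theorem getElem_play (i : ℕ) (h : i < (play e p).length) :
    (play e p)[i] = (p ⟨i, length_play e p ▸ h⟩, e ⟨i, length_play e p ▸ h⟩) :=
  List.getElem_ofFn h

def playCoalg (a : α) : PRW k α :=
  ⟨(play e p, e.symm a), (length_play e p).symm ▸ (e.symm a).isLt⟩

theorem eltOf_playCoalg (a : α) : eltOf (playCoalg e p a) = a := by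
  simp [eltOf, playCoalg]

theorem pebOf_playCoalg (a : α) : pebOf (playCoalg e p a) = p (e.symm a) := by
  simp [pebOf, playCoalg]

theorem playCoalg_counit (w : PRW k α) (hw : w.1.1 = play e p) :
    playCoalg e p (counit w) = w := by
  obtain ⟨⟨s, i⟩, hi⟩ := w
  subst hw
  apply Subtype.ext
  simp [counit, eltOf, playCoalg]

theorem isCoalg_playCoalg {σ : Signature} {A : Struct σ} (e : Fin n ≃ A.carrier)
    (p : Fin n → Fin k) (hp : ∀ i l j, i < l → l ≤ j → adj A (e i) (e j) → p i ≠ p l) :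
    IsCoalg k A (playCoalg e p) := by
  refine ⟨fun r x hx => ⟨fun _ _ => rfl, fun j j' l hl hjl hlj' => ?_, ?_⟩,
    funext (eltOf_playCoalg e p),
    comult_comp_eq_PRmap_comp _ fun _ => playCoalg_counit e p⟩
  · change ((play e p).get ⟨l, hl⟩).1 ≠ pebOf (playCoalg e p (x j))
    rw [List.get_eq_getElem, getElem_play, pebOf_playCoalg]
    refine (hp _ _ (e.symm (x j')) hjl hlj' ?_).symm
    rw [e.apply_symm_apply, e.apply_symm_apply]
    exact Or.inr ⟨r, x, hx, ⟨j, rfl⟩, ⟨j', rfl⟩⟩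
  · simpa only [eltOf_playCoalg] using hx

end Play

theorem IsPathDecomposition.exists_isCoalg {σ : Signature} {A : Struct σ} [Finite A.carrier]
    {X : Type*} [LinearOrder X] {lam : X → Set A.carrier} (hpd : IsPathDecomposition A lam)
    {w : ℕ} (hw : ∀ x, (lam x).Finite ∧ (lam x).ncard ≤ w + 1) :
    ∃ c : A.carrier → PRW (w + 1) A.carrier, IsCoalg (w + 1) A c := by
  obtain ⟨W, hWfin, hpdW⟩ := hpd.exists_finite_restrict
  have := hWfin.to_subtype
  obtain ⟨e, he⟩ := exists_equiv_fin_monotone_comp hpdW.firstBag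
  obtain ⟨p, hp⟩ := exists_fin_coloring_of_ncard_lt _ (hpdW.ncard_conflicts_lt (hw ·) e he)
  exact ⟨playCoalg e p, isCoalg_playCoalg e p fun i l j hil hlj h => hp i l hil ⟨j, hlj, h⟩⟩

/-- for finite A, pathwidth pw(A) equals the PR-coalgebra number
κ^{PR}(A) minus one, where pw(A) is the least w such that A has a path
decomposition all of whose bags have at most w+1 elements, and κ^{PR}(A) is the
least k admitting a PR_k-coalgebra on A. -/
theorem pathwidth_eq_coalgebra_number_sub_one
    (σ : Signature) (A : Struct σ) [Finite A.carrier] :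
    sInf {w : ℕ | ∃ (X : Type) (ord : LinearOrder X) (lam : X → Set A.carrier),
      (∀ a, ∃ x, a ∈ lam x) ∧
      (∀ a a', adj A a a' → ∃ x, a ∈ lam x ∧ a' ∈ lam x) ∧
      (∀ x y x' : X, ord.le x y → ord.le y x' → lam x ∩ lam x' ⊆ lam y) ∧
      (∀ x, (lam x).Finite ∧ (lam x).ncard ≤ w + 1)} =
    sInf {k : ℕ | ∃ α : A.carrier → PRW k A.carrier, IsCoalg k A α} - 1 := by
  apply sInf_eq_sInf_sub_one_of_succ_mem
  · exact ⟨Nat.card A.carrier, Unit, inferInstance, fun _ => Set.univ, fun _ => ⟨(), trivial⟩,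
      fun _ _ _ => ⟨(), trivial, trivial⟩, fun _ _ _ _ _ => Set.subset_univ _,
      fun _ => ⟨Set.toFinite _, by simp⟩⟩
  · rintro w ⟨X, ord, lam, hcov, hadj, hinter, hw⟩
    exact IsPathDecomposition.exists_isCoalg ⟨hcov, hadj, hinter⟩ hw
  · rintro k ⟨c, hc, hcounit, -⟩
    obtain ⟨X, ord, lam, hpd, hw⟩ := exists_pathDecomposition_of_hom_of_counit c hc hcounit
    exact ⟨X, ord, lam, hpd.1, hpd.2, hpd.3, fun x => ⟨(hw x).1, (hw x).2.trans le_tsub_add⟩⟩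
end

section
/- If Duplicator has a winning strategy in the all-in-one k-pebble game from A to B, then there exists a σ-homomorphism f : PR_k A → B (a coKleisli morphism for the pebble-relation comonad). -/
/-- Last element pebbled with p in a play. -/
def lastP {k : ℕ} {α : Type} (s : List (Fin k × α)) (p : Fin k) : Option α :=
  (s.reverse.find? (fun q => q.1 == p)).map Prod.snd

/-- The relation γ pairing, for each pebble, the last elements it pebbles in
the two plays. -/
def gammaRel {k : ℕ} {α β : Type} (s : List (Fin k × α)) (t : List (Fin k × β)) :
    Set (α × β) :=
  {ab | ∃ p, lastP s p = some ab.1 ∧ lastP t p = some ab.2}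

/-- γ is a partial homomorphism from A to B. -/
def PartialHom {σ : Signature} (A B : Struct σ) (γ : Set (A.carrier × B.carrier)) : Prop :=
  ∀ (r : σ.symb) (a : Fin (σ.ar r) → A.carrier) (b : Fin (σ.ar r) → B.carrier),
    (∀ j, (a j, b j) ∈ γ) → A.rel r a → B.rel r b

/-- t is a winning Duplicator response to Spoiler's play s in the all-in-one
k-pebble game: same pebbles at each index, and each prefix induces a partial
homomorphism on the active pebbled elements. -/
def WinResp {σ : Signature} (A B : Struct σ) {k : ℕ}
    (s : PSeq k A.carrier) (t : PSeq k B.carrier) : Prop :=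
  t.map Prod.fst = s.map Prod.fst ∧
  ∀ i, PartialHom A B (gammaRel (s.take i) (t.take i))

/-- Duplicator has a winning strategy in the all-in-one k-pebble game. -/
def DupWinAIO {σ : Signature} (A B : Struct σ) (k : ℕ) : Prop :=
  ∀ s : PSeq k A.carrier, ∃ t : PSeq k B.carrier, WinResp A B s t



lemma lastP_concat {k : ℕ} {α : Type} (s : List (Fin k × α)) (q : Fin k × α) (p : Fin k) :
    lastP (s ++ [q]) p = if q.1 = p then some q.2 else lastP s p := by
  simp only [lastP, List.reverse_append, List.reverse_cons, List.reverse_nil,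
    List.nil_append, List.cons_append, List.find?_cons]
  by_cases h : q.1 = p
  · have hb : (q.1 == p) = true := by simpa using h
    simp [hb, h]
  · have hb : (q.1 == p) = false := by simpa using h
    simp [hb, h]

lemma lastP_eq_of {k : ℕ} {α : Type} {p : Fin k} :
    ∀ (s : List (Fin k × α)) (i : ℕ) (h : i < s.length),
    (s[i]'h).1 = p →
    (∀ l (hl : l < s.length), i < l → (s[l]'hl).1 ≠ p) →
    lastP s p = some (s[i]'h).2 := by
  intro s
  induction s using List.reverseRecOn with
  | nil => intro i h; simp at h
  | append_singleton s q ih =>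
    intro i h hp hlast
    rcases Nat.lt_or_ge i s.length with hi | hi
    · have hq : q.1 ≠ p := by
        have hlen : s.length < (s ++ [q]).length := by simp
        have := hlast s.length hlen hi
        simpa using this
      rw [lastP_concat, if_neg hq]
      have hget : (s ++ [q])[i]'h = s[i]'hi := by
        rw [List.getElem_append_left]
      rw [hget]
      rw [hget] at hp
      refine ih i hi hp ?_
      intro l hl hil
      have hl' : l < (s ++ [q]).length := by simp; omega
      have := hlast l hl' hil
      rwa [show (s ++ [q])[l]'hl' = s[l]'hl from by rw [List.getElem_append_left]] at this
    · have hi' : i = s.length := by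
        have : i < s.length + 1 := by simpa using h
        omega
      subst hi'
      have hget : (s ++ [q])[s.length]'h = q := by simp
      rw [lastP_concat, hget]
      rw [hget] at hp
      simp [hp]

/-- a Duplicator winning strategy in the all-in-one k-pebble game
from A to B yields a coKleisli morphism, i.e. a σ-homomorphism PR_k A → B. -/
theorem aio_win_to_coKleisli (σ : Signature) (A B : Struct σ) (k : ℕ)
    (hwin : DupWinAIO A B k) :
    ∃ f : PRW k A.carrier → B.carrier, Hom (PR k A) B f := by
  classical
  have hT : ∀ s : PSeq k A.carrier, WinResp A B s (Classical.choose (hwin s)) :=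
    fun s => Classical.choose_spec (hwin s)
  set T : PSeq k A.carrier → PSeq k B.carrier := fun s => Classical.choose (hwin s) with hTdef
  have hlen : ∀ s, (T s).length = s.length := fun s => by
    simpa using congrArg List.length (hT s).1
  refine ⟨fun w => ((T w.1.1)[w.1.2]'(by rw [hlen]; exact w.2)).2, ?_⟩
  intro r x hx
  obtain ⟨hsame, hnore, hrel⟩ := hx
  by_cases hne : Nonempty (Fin (σ.ar r))
  swap
  · exact (hT []).2 0 r _ _ (fun j => absurd ⟨j⟩ hne) hrel
  obtain ⟨j0, hj0⟩ := Finite.exists_max (fun j => (x j).1.2)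
  set s : PSeq k A.carrier := (x j0).1.1 with hs
  have hplay : ∀ j, (x j).1.1 = s := fun j => hsame j j0
  set m : ℕ := (x j0).1.2 with hm
  have hjlt : ∀ j, (x j).1.2 < s.length := fun j => by rw [← hplay j]; exact (x j).2
  -- pebbles of t agree with pebbles of s
  have hpeb : ∀ (l : ℕ) (hl : l < s.length),
      ((T s)[l]'(by rw [hlen]; exact hl)).1 = (s[l]'hl).1 := by
    intro l hl
    have h1 : ((T s).map Prod.fst)[l]'(by simpa [hlen] using hl)
        = (s.map Prod.fst)[l]'(by simpa using hl) := List.getElem_of_eq (hT s).1 _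
    simpa using h1
  -- key pointwise facts about s
  have hsp : ∀ j, (s[(x j).1.2]'(hjlt j)).1 = pebOf (x j) := by
    intro j
    have := List.getElem_of_eq (hplay j) (x j).2
    simp only [pebOf, List.get_eq_getElem]
    rw [this]
  have hse : ∀ j, (s[(x j).1.2]'(hjlt j)).2 = eltOf (x j) := by
    intro j
    have := List.getElem_of_eq (hplay j) (x j).2
    simp only [eltOf, List.get_eq_getElem]
    rw [this]
  have hte : ∀ j, ((T s)[(x j).1.2]'(by rw [hlen]; exact hjlt j)).2
      = ((T (x j).1.1)[(x j).1.2]'(by rw [hlen]; exact (x j).2)).2 := by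
    intro j
    have h2 : T (x j).1.1 = T s := congrArg T (hplay j)
    have := List.getElem_of_eq h2 (i := (x j).1.2) (by rw [hlen]; exact (x j).2)
    rw [this]
  have hnore' : ∀ j l (hl : l < s.length), (x j).1.2 < l → l ≤ m →
      (s[l]'hl).1 ≠ pebOf (x j) := by
    intro j l hl hgt hle hc
    refine hnore j j0 l (by rw [hplay j]; exact hl) hgt hle ?_
    simp only [List.get_eq_getElem]
    rw [show ((x j).1.1)[l]'(by rw [hplay j]; exact hl) = s[l]'hl from
      List.getElem_of_eq (hplay j) (by rw [hplay j]; exact hl)]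
    exact hc
  apply (hT s).2 (m + 1) r (fun j => eltOf (x j)) _ _ hrel
  intro j
  refine ⟨pebOf (x j), ?_, ?_⟩
  · -- A side
    have hilt : (x j).1.2 < (s.take (m+1)).length := by
      simp only [List.length_take]
      exact lt_min (Nat.lt_succ_of_le (hj0 j)) (hjlt j)
    have hget : (s.take (m+1))[(x j).1.2]'hilt = s[(x j).1.2]'(hjlt j) := by
      simp [List.getElem_take]
    have hkey := lastP_eq_of (p := pebOf (x j)) (s.take (m+1)) (x j).1.2 hilt
      (by rw [hget]; exact hsp j) ?_
    · rw [hkey, hget, hse j]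
    · intro l hl hgtl
      have hls : l < s.length := by simp only [List.length_take] at hl; omega
      have hlm : l ≤ m := by simp only [List.length_take] at hl; omega
      rw [show (s.take (m+1))[l]'hl = s[l]'hls from by simp [List.getElem_take]]
      exact hnore' j l hls hgtl hlm
  · -- B side
    have hilt : (x j).1.2 < ((T s).take (m+1)).length := by
      simp only [List.length_take, hlen]
      exact lt_min (Nat.lt_succ_of_le (hj0 j)) (hjlt j)
    have hget : ((T s).take (m+1))[(x j).1.2]'hilt
        = (T s)[(x j).1.2]'(by rw [hlen]; exact hjlt j) := by
      simp [List.getElem_take]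
    have hkey := lastP_eq_of (p := pebOf (x j)) ((T s).take (m+1)) (x j).1.2 hilt
      (by rw [hget, hpeb _ (hjlt j)]; exact hsp j) ?_
    · rw [hkey, hget, hte j]
    · intro l hl hgtl
      have hls : l < s.length := by simp only [List.length_take, hlen] at hl; omega
      have hlm : l ≤ m := by simp only [List.length_take] at hl; omega
      rw [show ((T s).take (m+1))[l]'hl = (T s)[l]'(by rw [hlen]; exact hls) from
        by simp [List.getElem_take]]
      rw [hpeb l hls]
      exact hnore' j l hls hgtl hlm
end

section
/- Duplicator has a winning strategy in Dalmau's k-pebble relation game from A to B if and only if Duplicator has a winning strategy in the all-in-one k-pebble game from A to B. -/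
/-- h : A ⇀ B (encoded with Option) preserves relations wherever defined. -/
def IsPHomFn {σ : Signature} (A B : Struct σ) (h : A.carrier → Option B.carrier) : Prop :=
  ∀ (r : σ.symb) (a : Fin (σ.ar r) → A.carrier) (b : Fin (σ.ar r) → B.carrier),
    (∀ j, h (a j) = some (b j)) → A.rel r a → B.rel r b

/-- Restriction of a partial function to a finite domain. -/
def restrictTo {α β : Type} [DecidableEq α] (I : Finset α) (h : α → Option β) :
    α → Option β :=
  fun a => if a ∈ I then h a else none

/-- Duplicator has a winning strategy in Dalmau's k-pebble relation game:
there is a family W of positions (I,T), containing the initial position,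
consisting of positions with |I| ≤ k and T a nonempty set of homomorphisms
A|_I → B, closed under Spoiler's shrinking moves and admitting a response to
every blowing move. -/
def DalmauWin {σ : Signature} (A B : Struct σ) [DecidableEq A.carrier] (k : ℕ) : Prop :=
  ∃ W : Set (Finset A.carrier × Set (A.carrier → Option B.carrier)),
    ((∅ : Finset A.carrier), ({fun _ => none} : Set (A.carrier → Option B.carrier))) ∈ W ∧
    (∀ P ∈ W, P.1.card ≤ k ∧ P.2.Nonempty ∧
      ∀ h ∈ P.2, (∀ a, (h a).isSome ↔ a ∈ P.1) ∧ IsPHomFn A B h) ∧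
    (∀ P ∈ W, ∀ I' ⊆ P.1, (I', (restrictTo I') '' P.2) ∈ W) ∧
    (∀ P ∈ W, ∀ I' : Finset A.carrier, P.1 ⊆ I' → I'.card ≤ k →
      ∃ T' : Set (A.carrier → Option B.carrier),
        (∀ h' ∈ T', restrictTo P.1 h' ∈ P.2) ∧ (I', T') ∈ W)

/-!
Both games are compared through the elements pebbled at the end of an all-in-one play `s`: there
are at most `k` of them, and a pebble-compatible answer `t` induces a partial map on them.

Given a winning family `W` of the relation game, Duplicator answers a play move by move, keeping a
position of `W` on the pebbled elements all of whose maps are realised by answers to the play so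
far. When Spoiler puts a pebble on `a`, she shrinks to the elements that stay pebbled, blows up to
the new pebbled set, and answers with the image of `a` under a map of the new position.

Conversely, from winning answers in the all-in-one game, the positions `(I, T)` with `I` pebbled
at the end of some play `s` and `T` the restrictions to `I` of the maps induced by the winning
answers to `s` form a winning family. Shrinking keeps `s`. Blowing up to `I'` extends `s` by moving
pebbles onto `I' \ I`; at most `|I|` pebbles are the chosen pebble of an element of `I`, so enough
others are free, and winning answers to the extended play restrict to winning answers to `s` that
induce the same map on `I`.
-/

theorem List.find?_eq_of_imp {α : Type*} {l : List α} {P P' : α → Bool}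
    (himp : ∀ y ∈ l, P' y → P y) (hfound : ∀ x, l.find? P = some x → P' x) :
    l.find? P' = l.find? P := by
  cases hP : l.find? P with
  | none =>
    rw [List.find?_eq_none] at hP ⊢
    exact fun y hy hP' => hP y hy (himp y hy hP')
  | some x =>
    obtain ⟨-, as, bs, rfl, has⟩ := List.find?_eq_some_iff_append.1 hP
    refine List.find?_eq_some_iff_append.2 ⟨hfound x hP, as, bs, rfl, fun a ha => ?_⟩
    rw [Bool.not_eq_true', Bool.eq_false_iff]
    exact fun h => by simpa [himp a (by simp [ha]) h] using has a ha

section LastPebble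
variable {k : ℕ} {α β : Type}

@[simp]
theorem lastP_nil (p : Fin k) : lastP ([] : PSeq k α) p = none := rfl

theorem lastP_append (s u : PSeq k α) (p : Fin k) :
    lastP (s ++ u) p = (lastP u p).or (lastP s p) := by
  simp only [lastP, List.reverse_append, List.find?_append]
  cases u.reverse.find? (fun q => q.1 == p) <;> simp

theorem lastP_eq_none_iff {s : PSeq k α} {p : Fin k} :
    lastP s p = none ↔ p ∉ s.map Prod.fst := by
  simp only [lastP, Option.map_eq_none_iff, List.find?_eq_none, List.mem_reverse, beq_iff_eq,
    List.mem_map, not_exists, not_and]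

theorem lastP_snoc (s : PSeq k α) (x : Fin k × α) (p : Fin k) :
    lastP (s ++ [x]) p = if p = x.1 then some x.2 else lastP s p := by
  rw [lastP_append]
  by_cases h : p = x.1
  · subst h; simp [lastP]
  · simp [lastP, List.find?, Ne.symm h, h]

theorem lastP_append_of_notMem {s u : PSeq k α} {p : Fin k}
    (h : p ∉ u.map Prod.fst) : lastP (s ++ u) p = lastP s p := by
  rw [lastP_append, lastP_eq_none_iff.2 h, Option.none_or]

theorem lastP_isSome_congr {s : PSeq k α} {t : PSeq k β}
    (hst : t.map Prod.fst = s.map Prod.fst) (p : Fin k) :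
    (lastP t p).isSome ↔ (lastP s p).isSome := by
  simp only [← Option.ne_none_iff_isSome, ne_eq, lastP_eq_none_iff, hst]

end LastPebble

section ActivePebbles
variable {k : ℕ} {α β : Type} [DecidableEq α]

def activeSet (s : PSeq k α) : Finset α :=
  ((List.finRange k).filterMap (lastP s)).toFinset

theorem mem_activeSet {s : PSeq k α} {a : α} :
    a ∈ activeSet s ↔ ∃ p, lastP s p = some a := by
  simp [activeSet, List.mem_filterMap]

theorem card_activeSet_le (s : PSeq k α) : (activeSet s).card ≤ k :=
  calc (activeSet s).card ≤ ((List.finRange k).filterMap (lastP s)).length :=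
        List.toFinset_card_le _
    _ ≤ (List.finRange k).length := List.length_filterMap_le _ _
    _ = k := List.length_finRange

@[simp]
theorem activeSet_nil : activeSet ([] : PSeq k α) = ∅ := by
  ext a; simp [mem_activeSet]

theorem mem_activeSet_snoc_self (s : PSeq k α) (x : Fin k × α) :
    x.2 ∈ activeSet (s ++ [x]) :=
  mem_activeSet.2 ⟨x.1, by simp [lastP_snoc]⟩

def pebbleOn (s : PSeq k α) (a : α) : Option (Fin k) :=
  (List.finRange k).find? (fun p => lastP s p = some a)

theorem lastP_of_pebbleOn_eq_some {s : PSeq k α} {a : α} {p : Fin k}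
    (h : pebbleOn s a = some p) : lastP s p = some a := by
  simpa using List.find?_some h

theorem pebbleOn_isSome_iff {s : PSeq k α} {a : α} :
    (pebbleOn s a).isSome ↔ a ∈ activeSet s := by
  simp [pebbleOn, List.find?_isSome, mem_activeSet]

/-- Several pebbles may lie on `a` and carry different elements of `t`, so one is singled out:
the least one. -/
def inducedMap (s : PSeq k α) (t : PSeq k β) (a : α) : Option β :=
  (pebbleOn s a).bind (lastP t)

theorem mem_gammaRel_of_inducedMap_eq_some {s : PSeq k α} {t : PSeq k β} {a : α} {b : β}
    (h : inducedMap s t a = some b) : (a, b) ∈ gammaRel s t := by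
  obtain ⟨p, hp, hpt⟩ := Option.bind_eq_some_iff.1 h
  exact ⟨p, lastP_of_pebbleOn_eq_some hp, hpt⟩

theorem inducedMap_isSome_iff {s : PSeq k α} {t : PSeq k β}
    (hst : t.map Prod.fst = s.map Prod.fst) (a : α) :
    (inducedMap s t a).isSome ↔ a ∈ activeSet s := by
  rw [← pebbleOn_isSome_iff, inducedMap]
  cases hp : pebbleOn s a with
  | none => simp
  | some p =>
    simp only [Option.bind_some, Option.isSome_some, iff_true]
    rw [lastP_isSome_congr hst, lastP_of_pebbleOn_eq_some hp, Option.isSome_some]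

end ActivePebbles

section Extension
variable {k : ℕ} {α : Type} [DecidableEq α]

theorem pebbleOn_snoc_of_ne {s : PSeq k α} {a : α} {x : Fin k × α}
    (hq : pebbleOn s a ≠ some x.1) (hx : x.2 ≠ a) : pebbleOn (s ++ [x]) a = pebbleOn s a := by
  refine List.find?_eq_of_imp (fun p _ hp => ?_) (fun p hp => ?_)
  · have hp : lastP (s ++ [x]) p = some a := by simpa using hp
    rw [lastP_snoc] at hp
    split_ifs at hp
    · exact absurd (Option.some_inj.1 hp) hx
    · simpa using hp
  · have hpq : p ≠ x.1 := fun h => hq (h ▸ hp)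
    simpa [lastP_snoc, hpq] using lastP_of_pebbleOn_eq_some hp

theorem exists_pebble_forall_pebbleOn_ne (s : PSeq k α) {J : Finset α} (hJ : J.card < k) :
    ∃ q : Fin k, ∀ a ∈ J, pebbleOn s a ≠ some q := by
  have hcard : (J.image (pebbleOn s)).card < (Finset.univ.image (some : Fin k → _)).card := by
    rw [Finset.card_image_of_injective _ (Option.some_injective _), Finset.card_univ,
      Fintype.card_fin]
    exact Finset.card_image_le.trans_lt hJ
  obtain ⟨o, ho, hnot⟩ := Finset.exists_mem_notMem_of_card_lt_card hcard
  obtain ⟨q, -, rfl⟩ := Finset.mem_image.1 ho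
  exact ⟨q, fun a ha h => hnot (Finset.mem_image.2 ⟨a, ha, h⟩)⟩

theorem exists_snoc_insert_subset_activeSet {s : PSeq k α} {J : Finset α} (hJ : J ⊆ activeSet s)
    (hcard : J.card < k) {x : α} (hx : x ∉ J) :
    ∃ q : Fin k, insert x J ⊆ activeSet (s ++ [(q, x)]) ∧
      ∀ a ∈ J, pebbleOn (s ++ [(q, x)]) a = pebbleOn s a ∧ pebbleOn s a ≠ some q := by
  obtain ⟨q, hq⟩ := exists_pebble_forall_pebbleOn_ne s hcard
  have hpres : ∀ a ∈ J, pebbleOn (s ++ [(q, x)]) a = pebbleOn s a := fun a ha =>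
    pebbleOn_snoc_of_ne (hq a ha) (fun h : x = a => hx (h ▸ ha))
  refine ⟨q, Finset.insert_subset (mem_activeSet_snoc_self s (q, x)) fun a ha => ?_,
    fun a ha => ⟨hpres a ha, hq a ha⟩⟩
  rw [← pebbleOn_isSome_iff, hpres a ha, pebbleOn_isSome_iff]
  exact hJ ha

theorem exists_append_union_subset_activeSet {s : PSeq k α} {I : Finset α}
    (hI : I ⊆ activeSet s) (J : Finset α) (hcard : (I ∪ J).card ≤ k) :
    ∃ u : PSeq k α, I ∪ J ⊆ activeSet (s ++ u) ∧
      ∀ a ∈ I, pebbleOn (s ++ u) a = pebbleOn s a ∧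
        ∀ p, pebbleOn s a = some p → p ∉ u.map Prod.fst := by
  induction J using Finset.induction_on with
  | empty => exact ⟨[], by simpa using hI, by simp⟩
  | insert x J _ ih =>
    obtain ⟨u, hu, hpres⟩ := ih ((Finset.card_le_card (by simp)).trans hcard)
    by_cases hx : x ∈ I ∪ J
    · exact ⟨u, by simpa [Finset.union_insert, Finset.insert_eq_of_mem hx] using hu, hpres⟩
    · have hlt : (I ∪ J).card < k := by
        rw [Finset.union_insert, Finset.card_insert_of_notMem hx] at hcard
        omega
      obtain ⟨q, hq, hqpres⟩ := exists_snoc_insert_subset_activeSet hu hlt hx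
      refine ⟨u ++ [(q, x)], ?_, fun a ha => ?_⟩
      · simpa [Finset.union_insert] using hq
      · obtain ⟨hqa, hqne⟩ := hqpres a (Finset.mem_union_left J ha)
        obtain ⟨hua, hnot⟩ := hpres a ha
        rw [← List.append_assoc, hqa, hua]
        refine ⟨rfl, fun p hp => ?_⟩
        have hpq : p ≠ q := fun h => hqne (by rw [hua, hp, h])
        simpa [hpq] using hnot p hp

end Extension

section Restriction
variable {α β : Type} [DecidableEq α]

theorem restrictTo_restrictTo {I I' : Finset α} (h : I ⊆ I') (f : α → Option β) :
    restrictTo I (restrictTo I' f) = restrictTo I f := by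
  funext a
  by_cases ha : a ∈ I
  · simp [restrictTo, ha, h ha]
  · simp [restrictTo, ha]

@[simp]
theorem restrictTo_empty (f : α → Option β) :
    restrictTo (∅ : Finset α) f = fun _ => none := by
  funext a; simp [restrictTo]

theorem restrictTo_isSome_iff {I : Finset α} {f : α → Option β} {D : Finset α}
    (hf : ∀ a, (f a).isSome ↔ a ∈ D) (hI : I ⊆ D) (a : α) :
    (restrictTo I f a).isSome ↔ a ∈ I := by
  by_cases ha : a ∈ I
  · simp [restrictTo, ha, (hf a).2 (hI ha)]
  · simp [restrictTo, ha]

theorem IsPHomFn.restrictTo {σ : Signature} {A B : Struct σ} [DecidableEq A.carrier]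
    {f : A.carrier → Option B.carrier} (hf : IsPHomFn A B f) (I : Finset A.carrier) :
    IsPHomFn A B (_root_.restrictTo I f) := by
  refine fun r a b hab => hf r a b fun j => ?_
  have := hab j
  by_cases h : a j ∈ I <;> simp_all [_root_.restrictTo]

end Restriction

section Responses
variable {σ : Signature} {A B : Struct σ} {k : ℕ}

theorem isPHomFn_of_graph_subset {f : A.carrier → Option B.carrier}
    {γ : Set (A.carrier × B.carrier)} (hγ : PartialHom A B γ)
    (hf : ∀ a b, f a = some b → (a, b) ∈ γ) : IsPHomFn A B f :=
  fun r a b hab => hγ r a b fun j => hf _ _ (hab j)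

def Tracks {α β : Type} (s : PSeq k α) (t : PSeq k β) (h : α → Option β) : Prop :=
  ∀ p a, lastP s p = some a → lastP t p = h a

theorem Tracks.partialHom_gammaRel {s : PSeq k A.carrier} {t : PSeq k B.carrier}
    {h : A.carrier → Option B.carrier} (ht : Tracks s t h) (hh : IsPHomFn A B h) :
    PartialHom A B (gammaRel s t) := by
  refine fun r a b hab => hh r a b fun j => ?_
  obtain ⟨p, hs, htp⟩ := hab j
  rw [← ht p _ hs, htp]

theorem Tracks.snoc {α β : Type} [DecidableEq α] {s : PSeq k α} {t : PSeq k β}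
    {h h' : α → Option β} (ht : Tracks s t h) {p : Fin k} {a : α} {b : β}
    (hagree : ∀ a' ∈ activeSet s ∩ activeSet (s ++ [(p, a)]), h a' = h' a')
    (hb : h' a = some b) : Tracks (s ++ [(p, a)]) (t ++ [(p, b)]) h' := by
  intro q a' hq
  rw [lastP_snoc] at hq ⊢
  split_ifs at hq ⊢ with hqp
  · rw [← Option.some_inj.1 hq, hb]
  · refine (ht q a' hq).trans (hagree a' (Finset.mem_inter.2 ⟨?_, ?_⟩))
    · exact mem_activeSet.2 ⟨q, hq⟩
    · exact mem_activeSet.2 ⟨q, by rw [lastP_snoc, if_neg hqp, hq]⟩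

theorem WinResp.length_eq {s : PSeq k A.carrier} {t : PSeq k B.carrier}
    (hw : WinResp A B s t) : t.length = s.length := by
  simpa using congrArg List.length hw.1

theorem WinResp.partialHom_gammaRel {s : PSeq k A.carrier} {t : PSeq k B.carrier}
    (hw : WinResp A B s t) : PartialHom A B (gammaRel s t) := by
  simpa [List.take_of_length_le, hw.length_eq] using hw.2 s.length

theorem winResp_nil (h : PartialHom A B (gammaRel ([] : PSeq k A.carrier) [])) :
    WinResp A B ([] : PSeq k A.carrier) [] :=
  ⟨rfl, fun _ => by simpa using h⟩

theorem WinResp.snoc {s : PSeq k A.carrier} {t : PSeq k B.carrier}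
    (hw : WinResp A B s t) {x : Fin k × A.carrier} {y : Fin k × B.carrier} (hxy : y.1 = x.1)
    (hγ : PartialHom A B (gammaRel (s ++ [x]) (t ++ [y]))) :
    WinResp A B (s ++ [x]) (t ++ [y]) := by
  refine ⟨by simp [hw.1, hxy], fun i => ?_⟩
  rcases le_or_gt i s.length with hi | hi
  · rw [List.take_append_of_le_length hi,
      List.take_append_of_le_length (hw.length_eq ▸ hi)]
    exact hw.2 i
  · rwa [List.take_of_length_le (by simpa using hi),
      List.take_of_length_le (by simp [hw.length_eq]; omega)]

theorem WinResp.take_of_append {s u : PSeq k A.carrier} {t : PSeq k B.carrier}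
    (hw : WinResp A B (s ++ u) t) : WinResp A B s (t.take s.length) := by
  refine ⟨?_, fun i => ?_⟩
  · rw [List.map_take, hw.1, List.map_append, List.take_append_of_le_length (by simp),
      List.take_of_length_le (by simp)]
  · have hs : s.take i = (s ++ u).take (min i s.length) := by
      rw [← List.take_take, List.take_append_of_le_length le_rfl, List.take_length]
    rw [hs, List.take_take]
    exact hw.2 _

end Responses

section DalmauToAllInOne
variable {σ : Signature} {A B : Struct σ} [DecidableEq A.carrier] {k : ℕ}

theorem exists_tracked_position_snoc
    {W : Set (Finset A.carrier × Set (A.carrier → Option B.carrier))}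
    (hValid : ∀ P ∈ W, ∀ h ∈ P.2, (∀ a, (h a).isSome ↔ a ∈ P.1) ∧ IsPHomFn A B h)
    (hShrink : ∀ P ∈ W, ∀ I' ⊆ P.1, (I', (restrictTo I') '' P.2) ∈ W)
    (hBlow : ∀ P ∈ W, ∀ I' : Finset A.carrier, P.1 ⊆ I' → I'.card ≤ k →
      ∃ T' : Set (A.carrier → Option B.carrier),
        (∀ h' ∈ T', restrictTo P.1 h' ∈ P.2) ∧ (I', T') ∈ W)
    {s : PSeq k A.carrier} {T : Set (A.carrier → Option B.carrier)} (hT : (activeSet s, T) ∈ W)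
    (hTtracked : ∀ h ∈ T, ∃ t, WinResp A B s t ∧ Tracks s t h) (x : Fin k × A.carrier) :
    ∃ T' : Set (A.carrier → Option B.carrier), (activeSet (s ++ [x]), T') ∈ W ∧
      ∀ h ∈ T', ∃ t, WinResp A B (s ++ [x]) t ∧ Tracks (s ++ [x]) t h := by
  obtain ⟨p, a⟩ := x
  set J := activeSet s ∩ activeSet (s ++ [(p, a)])
  obtain ⟨T', hresp, hT'⟩ := hBlow _ (hShrink _ hT J Finset.inter_subset_left) _
    Finset.inter_subset_right (card_activeSet_le _)
  refine ⟨T', hT', fun h' hh' => ?_⟩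
  obtain ⟨h, hh, hJ⟩ := hresp h' hh'
  obtain ⟨t, hw, ht⟩ := hTtracked h hh
  obtain ⟨hdom', hphom'⟩ := hValid _ hT' h' hh'
  obtain ⟨b, hb⟩ := Option.isSome_iff_exists.1 ((hdom' a).2 (mem_activeSet_snoc_self s (p, a)))
  have hagree : ∀ a' ∈ J, h a' = h' a' := fun a' ha' => by
    simpa [restrictTo, ha'] using congrFun hJ a'
  have ht' := ht.snoc hagree hb
  exact ⟨_, hw.snoc rfl (ht'.partialHom_gammaRel hphom'), ht'⟩

theorem DalmauWin.dupWinAIO (hD : DalmauWin A B k) : DupWinAIO A B k := by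
  obtain ⟨W, hInit, hValid, hShrink, hBlow⟩ := hD
  have hValid' : ∀ P ∈ W, ∀ h ∈ P.2,
      (∀ a, (h a).isSome ↔ a ∈ P.1) ∧ IsPHomFn A B h :=
    fun P hP => (hValid P hP).2.2
  have htracked : ∀ s : PSeq k A.carrier, ∃ T, (activeSet s, T) ∈ W ∧
      ∀ h ∈ T, ∃ t, WinResp A B s t ∧ Tracks s t h := by
    intro s
    induction s using List.reverseRecOn with
    | nil =>
      refine ⟨_, by simpa using hInit, ?_⟩
      rintro _ rfl
      have ht : Tracks ([] : PSeq k A.carrier) ([] : PSeq k B.carrier) (fun _ => none) := by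
        simp [Tracks]
      exact ⟨[], winResp_nil (ht.partialHom_gammaRel (hValid' _ hInit _ rfl).2), ht⟩
    | append_singleton s x ih =>
      obtain ⟨T, hT, hTtracked⟩ := ih
      exact exists_tracked_position_snoc hValid' hShrink hBlow hT hTtracked x
  intro s
  obtain ⟨T, hT, hTtracked⟩ := htracked s
  obtain ⟨h, hh⟩ := (hValid _ hT).2.1
  obtain ⟨t, hw, -⟩ := hTtracked h hh
  exact ⟨t, hw⟩

end DalmauToAllInOne

section AllInOneToDalmau
variable {σ : Signature} {A B : Struct σ} [DecidableEq A.carrier] {k : ℕ}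

theorem restrictTo_inducedMap_append {s u : PSeq k A.carrier} {t : PSeq k B.carrier}
    {I : Finset A.carrier} (hst : t.map Prod.fst = (s ++ u).map Prod.fst)
    (hu : ∀ a ∈ I, pebbleOn (s ++ u) a = pebbleOn s a ∧
      ∀ p, pebbleOn s a = some p → p ∉ u.map Prod.fst) :
    restrictTo I (inducedMap (s ++ u) t) = restrictTo I (inducedMap s (t.take s.length)) := by
  funext a
  by_cases ha : a ∈ I
  · obtain ⟨hpeb, hfree⟩ := hu a ha
    simp only [restrictTo, if_pos ha, inducedMap, hpeb]
    cases hp : pebbleOn s a with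
    | none => rfl
    | some p =>
      have hdrop : (t.drop s.length).map Prod.fst = u.map Prod.fst := by
        rw [List.map_drop, hst, List.map_append, ← List.length_map (f := Prod.fst),
          List.drop_left]
      rw [Option.bind_some, Option.bind_some]
      nth_rewrite 1 [← List.take_append_drop s.length t]
      exact lastP_append_of_notMem (hdrop ▸ hfree p hp)
  · simp [restrictTo, ha]

def responseMaps (A B : Struct σ) [DecidableEq A.carrier] (s : PSeq k A.carrier)
    (I : Finset A.carrier) : Set (A.carrier → Option B.carrier) :=
  (fun t => restrictTo I (inducedMap s t)) '' {t | WinResp A B s t}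

theorem image_restrictTo_responseMaps {s : PSeq k A.carrier} {I I' : Finset A.carrier}
    (h : I' ⊆ I) : restrictTo I' '' responseMaps A B s I = responseMaps A B s I' := by
  simp only [responseMaps, Set.image_image, restrictTo_restrictTo h]

theorem responseMaps_nonempty (hA : DupWinAIO A B k) (s : PSeq k A.carrier)
    (I : Finset A.carrier) : (responseMaps A B s I).Nonempty :=
  let ⟨t, ht⟩ := hA s
  ⟨_, t, ht, rfl⟩

theorem isSome_iff_and_isPHomFn_of_mem_responseMaps {s : PSeq k A.carrier} {I : Finset A.carrier}
    (hI : I ⊆ activeSet s) {h : A.carrier → Option B.carrier}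
    (hh : h ∈ responseMaps A B s I) :
    (∀ a, (h a).isSome ↔ a ∈ I) ∧ IsPHomFn A B h := by
  obtain ⟨t, hw, rfl⟩ := hh
  refine ⟨restrictTo_isSome_iff (inducedMap_isSome_iff hw.1) hI, IsPHomFn.restrictTo ?_ I⟩
  exact isPHomFn_of_graph_subset hw.partialHom_gammaRel
    fun _ _ => mem_gammaRel_of_inducedMap_eq_some

theorem restrictTo_mem_responseMaps_of_append {s u : PSeq k A.carrier}
    {I I' : Finset A.carrier} (hII' : I ⊆ I')
    (hu : ∀ a ∈ I, pebbleOn (s ++ u) a = pebbleOn s a ∧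
      ∀ p, pebbleOn s a = some p → p ∉ u.map Prod.fst)
    {h : A.carrier → Option B.carrier} (hh : h ∈ responseMaps A B (s ++ u) I') :
    restrictTo I h ∈ responseMaps A B s I := by
  obtain ⟨t, hw, rfl⟩ := hh
  refine ⟨t.take s.length, hw.take_of_append, ?_⟩
  rw [restrictTo_restrictTo hII', restrictTo_inducedMap_append hw.1 hu]

def allInOnePositions (A B : Struct σ) [DecidableEq A.carrier] (k : ℕ) :
    Set (Finset A.carrier × Set (A.carrier → Option B.carrier)) :=
  {P | P.1.card ≤ k ∧
    ∃ s : PSeq k A.carrier, P.1 ⊆ activeSet s ∧ P.2 = responseMaps A B s P.1}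

theorem DupWinAIO.dalmauWin (hA : DupWinAIO A B k) : DalmauWin A B k := by
  refine ⟨allInOnePositions A B k, ⟨by simp, [], by simp, ?_⟩, ?_, ?_, ?_⟩
  · ext h
    simp only [Set.mem_singleton_iff, responseMaps, restrictTo_empty]
    exact ⟨fun hh => hh ▸ ⟨_, (hA []).choose_spec, rfl⟩, fun ⟨_, _, hh⟩ => hh.symm⟩
  · rintro ⟨I, T⟩ ⟨hcard, s, hI, hT : T = responseMaps A B s I⟩
    subst hT
    exact ⟨hcard, responseMaps_nonempty hA s I,
      fun _ => isSome_iff_and_isPHomFn_of_mem_responseMaps hI⟩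
  · rintro ⟨I, T⟩ ⟨hcard, s, hI, hT : T = responseMaps A B s I⟩ I' hI'
    subst hT
    exact ⟨(Finset.card_le_card hI').trans hcard, s, hI'.trans hI,
      image_restrictTo_responseMaps hI'⟩
  · rintro ⟨I, T⟩ ⟨-, s, hI, hT : T = responseMaps A B s I⟩ I' hII' hcard'
    subst hT
    have hunion : I ∪ I' = I' := Finset.union_eq_right.2 hII'
    obtain ⟨u, hu, hpres⟩ := exists_append_union_subset_activeSet hI I' (by rwa [hunion])
    rw [hunion] at hu
    exact ⟨responseMaps A B (s ++ u) I',
      fun _ => restrictTo_mem_responseMaps_of_append hII' hpres, hcard', s ++ u, hu, rfl⟩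

end AllInOneToDalmau

/-- Duplicator wins Dalmau's k-pebble relation game from A to B
iff Duplicator wins the all-in-one k-pebble game from A to B. -/
theorem dalmau_iff_aio (σ : Signature) (A B : Struct σ) [DecidableEq A.carrier] (k : ℕ) :
    DalmauWin A B k ↔ DupWinAIO A B k :=
  ⟨DalmauWin.dupWinAIO, DupWinAIO.dalmauWin⟩
end

section
/- For a σ-structure A and the pebble-relation comonad PR_k, the structure (PR_k A, ≤*, π_A), where (t,i) ≤* (t',j) iff t = t' and i ≤ j, and π_A(s,i) is the pebble at position i of s, satisfies: (E) any two elements of PR_k A related in some tuple of a relation of PR_k A are ≤*-comparable; (P) if (t,i) and (t,j) are related in a tuple with i ≤ j, then for every l with i < l ≤ j, π_A(t,l) ≠ π_A(t,i); and (L)+(tree-order) (PR_k A, ≤*) is a disjoint union of linear orders, i.e., both the down-set and up-set of every element are linearly ordered. -/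
/-- The order ≤* on PR_k A: (t,i) ≤* (t',j) iff t = t' and i ≤ j. -/
def prLe {k : ℕ} {α : Type} (w w' : PRW k α) : Prop :=
  w.1.1 = w'.1.1 ∧ w.1.2 ≤ w'.1.2

/-- (PR_k A, ≤*, π_A) satisfies (E): related elements are
≤*-comparable; (P): in a related pair (t,i),(t,j) with i ≤ j, the pebble of
position i does not reoccur at positions i+1,...,j; and (L)+(tree-order):
down-sets and up-sets are linearly ordered, so (PR_k A, ≤*) is a disjoint union
of linear orders. -/
theorem pr_linear_forest_structure (σ : Signature) (k : ℕ) (A : Struct σ) :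
    (∀ w w' : PRW k A.carrier, adj (PR k A) w w' → prLe w w' ∨ prLe w' w) ∧
    (∀ (r : σ.symb) (x : Fin (σ.ar r) → PRW k A.carrier),
      (PR k A).rel r x →
      ∀ j j', (x j).1.2 ≤ (x j').1.2 →
        ∀ l (h : l < (x j).1.1.length), (x j).1.2 < l → l ≤ (x j').1.2 →
          ((x j).1.1.get ⟨l, h⟩).1 ≠ pebOf (x j)) ∧
    (∀ w u v : PRW k A.carrier, prLe u w → prLe v w → prLe u v ∨ prLe v u) ∧
    (∀ w u v : PRW k A.carrier, prLe w u → prLe w v → prLe u v ∨ prLe v u) := by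
  refine ⟨?_, ?_, ?_, ?_⟩
  · rintro w w' (rfl | ⟨r, x, ⟨hsame, _, _⟩, ⟨i, rfl⟩, ⟨i', rfl⟩⟩)
    · exact Or.inl ⟨rfl, le_refl _⟩
    · rcases le_total (x i).1.2 (x i').1.2 with h | h
      · exact Or.inl ⟨hsame i i', h⟩
      · exact Or.inr ⟨hsame i' i, h⟩
  · rintro r x ⟨hsame, hno, _⟩ j j' hle l h hl hl'
    exact hno j j' l h hl hl'
  · rintro w u v ⟨h1, h2⟩ ⟨h3, h4⟩
    rcases le_total u.1.2 v.1.2 with h | h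
    · exact Or.inl ⟨h1.trans h3.symm, h⟩
    · exact Or.inr ⟨h3.trans h1.symm, h⟩
  · rintro w u v ⟨h1, h2⟩ ⟨h3, h4⟩
    rcases le_total u.1.2 v.1.2 with h | h
    · exact Or.inl ⟨h1.symm.trans h3, h⟩
    · exact Or.inr ⟨h3.symm.trans h1, h⟩
end

section
/- For every finite σ-structure A with a k-pebble linear forest cover, the number of bags needed is controlled as follows: each part S_i of the cover, ordered by ≤_i and enumerated as a_1 ≤_i ... ≤_i a_m, yields via t_i = [(p(a_1), a_1), ..., (p(a_m), a_m)] and α_i(a_j) = (t_i, j) a map α = ⋃_i α_i : A → PR_k A which is a σ-homomorphism satisfying ε_A ∘ α = id_A. -/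
/-- A k-pebble linear forest cover of A: a partition of the universe into
linearly ordered parts (encoded as duplicate-free lists) together with a
pebbling function p : A → [k] satisfying (FC1) and (FC2). -/
structure LFCover (σ : Signature) (A : Struct σ) (k : ℕ) [DecidableEq A.carrier] : Type where
  parts : List (List A.carrier)
  nodup : ∀ l ∈ parts, l.Nodup
  disj : parts.Pairwise (fun l l' => ∀ a ∈ l, a ∉ l')
  cover : ∀ a, ∃ l ∈ parts, a ∈ l
  peb : A.carrier → Fin k
  fc1 : ∀ a a', adj A a a' → ∃ l ∈ parts, a ∈ l ∧ a' ∈ l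
  fc2 : ∀ l ∈ parts, ∀ a a' b, a ∈ l → a' ∈ l → b ∈ l → adj A a a' →
    l.idxOf a ≤ l.idxOf a' → l.idxOf a < l.idxOf b →
    l.idxOf b ≤ l.idxOf a' → peb b ≠ peb a

theorem adj_of_rel {σ : Signature} {A : Struct σ} {r : σ.symb} {x : Fin (σ.ar r) → A.carrier}
    (hx : A.rel r x) (j j' : Fin (σ.ar r)) : adj A (x j) (x j') :=
  Or.inr ⟨r, x, hx, ⟨j, rfl⟩, ⟨j', rfl⟩⟩

namespace LFCover

variable {σ : Signature} {A : Struct σ} {k : ℕ} [DecidableEq A.carrier] (C : LFCover σ A k)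

theorem eq_of_mem_of_mem {l l' : List A.carrier} (hl : l ∈ C.parts) (hl' : l' ∈ C.parts)
    {a : A.carrier} (ha : a ∈ l) (ha' : a ∈ l') : l = l' := by
  by_contra hne
  have : Std.Symm (fun (l l' : List A.carrier) => ∀ a ∈ l, a ∉ l') :=
    ⟨fun _ _ h b hb hb' => h b hb' hb⟩
  exact C.disj.forall hl hl' hne a ha ha'

/-- The play `t_i` of the paper attached to the part `l = S_i`. -/
def play (l : List A.carrier) : PSeq k A.carrier := l.map fun b => (C.peb b, b)

theorem getElem_play_idxOf {l : List A.carrier} {a : A.carrier}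
    (h : l.idxOf a < (C.play l).length) : (C.play l)[l.idxOf a] = (C.peb a, a) := by
  simp only [play, List.getElem_map, List.getElem_idxOf]

theorem noReoccur_play {l : List A.carrier} (hl : l ∈ C.parts) {a a' : A.carrier}
    (ha : a ∈ l) (ha' : a' ∈ l) (hadj : adj A a a') :
    NoReoccur (C.play l) (l.idxOf a) (l.idxOf a') (C.peb a) := by
  intro m hm hlt hle
  have hm' : m < l.length := by simpa [play] using hm
  have hidx : l.idxOf l[m] = m := (C.nodup l hl).idxOf_getElem m hm'
  simpa [play] using
    C.fc2 l hl a a' l[m] ha ha' (List.getElem_mem hm') hadj (by omega) (by omega) (by omega)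

noncomputable def part (a : A.carrier) : List A.carrier := (C.cover a).choose

theorem part_mem (a : A.carrier) : C.part a ∈ C.parts := (C.cover a).choose_spec.1

theorem mem_part (a : A.carrier) : a ∈ C.part a := (C.cover a).choose_spec.2

theorem part_eq {l : List A.carrier} (hl : l ∈ C.parts) {a : A.carrier} (ha : a ∈ l) :
    C.part a = l :=
  C.eq_of_mem_of_mem (C.part_mem a) hl (C.mem_part a) ha

/-- The map `α = ⋃ α_i : A → PR_k A`. -/
noncomputable def toPR (a : A.carrier) : PRW k A.carrier :=
  ⟨(C.play (C.part a), (C.part a).idxOf a), by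
    simpa [play] using List.idxOf_lt_length_iff.mpr (C.mem_part a)⟩

theorem toPR_val {l : List A.carrier} (hl : l ∈ C.parts) {a : A.carrier} (ha : a ∈ l) :
    (C.toPR a).1 = (C.play l, l.idxOf a) := by
  simp only [toPR, C.part_eq hl ha]

theorem eltOf_toPR (a : A.carrier) : eltOf (C.toPR a) = a := by
  simp [eltOf, toPR, C.getElem_play_idxOf]

theorem pebOf_toPR (a : A.carrier) : pebOf (C.toPR a) = C.peb a := by
  simp [pebOf, toPR, C.getElem_play_idxOf]

theorem counit_comp_toPR : counit ∘ C.toPR = id :=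
  funext C.eltOf_toPR

/-- By (FC1) the images of a tuple of `A` lie on a common play, and (FC2) is exactly the
active-pebble condition on it. -/
theorem hom_toPR : Hom A (PR k A) C.toPR := by
  intro r x hx
  refine ⟨fun j j' => ?_, fun j j' => ?_, ?_⟩
  · obtain ⟨l, hl, hj, hj'⟩ := C.fc1 _ _ (adj_of_rel hx j j')
    rw [C.toPR_val hl hj, C.toPR_val hl hj']
  · obtain ⟨l, hl, hj, hj'⟩ := C.fc1 _ _ (adj_of_rel hx j j')
    rw [C.toPR_val hl hj, C.toPR_val hl hj', C.pebOf_toPR]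
    exact C.noReoccur_play hl hj hj' (adj_of_rel hx j j')
  · simpa only [C.eltOf_toPR] using hx

end LFCover

theorem cover_map_is_hom_with_counit_law_general
    (σ : Signature) (A : Struct σ) (k : ℕ) [DecidableEq A.carrier]
    (C : LFCover σ A k) :
    ∃ α : A.carrier → PRW k A.carrier,
      (∀ a, ∀ l ∈ C.parts, a ∈ l →
        (α a).1 = (l.map (fun b => (C.peb b, b)), l.idxOf a)) ∧
      Hom A (PR k A) α ∧
      counit ∘ α = id :=
  ⟨C.toPR, fun _ _ hl ha => C.toPR_val hl ha, C.hom_toPR, C.counit_comp_toPR⟩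

/-- from a k-pebble linear forest cover of a finite A, the map
α sending a ∈ S_i (enumerated by ≤_i as a_1 ≤_i ... ≤_i a_m) to
(t_i, j) with t_i = [(p(a_1),a_1),...,(p(a_m),a_m)] and a = a_j, is a
σ-homomorphism A → PR_k A satisfying ε_A ∘ α = id. -/
theorem cover_map_is_hom_with_counit_law
    (σ : Signature) (A : Struct σ) (k : ℕ) [Finite A.carrier] [DecidableEq A.carrier]
    (C : LFCover σ A k) :
    ∃ α : A.carrier → PRW k A.carrier,
      (∀ a, ∀ l ∈ C.parts, a ∈ l →
        (α a).1 = (l.map (fun b => (C.peb b, b)), l.idxOf a)) ∧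
      Hom A (PR k A) α ∧
      counit ∘ α = id :=
  cover_map_is_hom_with_counit_law_general σ A k C
end
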